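/- If a polynomial p with natural coefficients has abstraction vector α(p) whose i-th entry is 0, then p does not depend on the variable Xᵢ (Xᵢ does not appear in p); if the i-th entry is L, then p has the form Xᵢ + r where r does not contain Xᵢ. -/

import Mathlib

/-- The iSAPP algebra of abstract values: `0 < L < A < M`. -/
inductive Val : Type
  | z | L | A | M
  deriving DecidableEq, Repr

instance instFintypeVal : Fintype Val :=
  ⟨⟨↑[Val.z, Val.L, Val.A, Val.M], by decide⟩, fun x => by cases x <;> decide⟩

namespace Val

def toNat : Val → ℕ
  | z => 0 | L => 1 | A => 2 | M => 3

instance : LinearOrder Val := LinearOrder.lift' toNat (by decide)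

/-- The iSAPP addition table: `0` neutral, `L+L = A`, `L+A = A+A = A`, `M` absorbing. -/
def add : Val → Val → Val
  | z, x => x
  | x, z => x
  | M, _ => M
  | _, M => M
  | L, L => A
  | L, A => A
  | A, L => A
  | A, A => A

/-- The iSAPP multiplication table: `0` absorbing, `L` neutral,
`A×A = A`, `A×M = M×A = M×M = M`. -/
def mul : Val → Val → Val
  | z, _ => z
  | _, z => z
  | L, x => x
  | x, L => x
  | A, A => A
  | A, M => M
  | M, A => M
  | M, M => M

end Val

instance : Zero Val := ⟨Val.z⟩
instance : Add Val := ⟨Val.add⟩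
instance : One Val := ⟨Val.L⟩
instance : Mul Val := ⟨Val.mul⟩

instance : CommSemiring Val where
  add := Val.add
  add_assoc := by decide
  zero := Val.z
  zero_add := by decide
  add_zero := by decide
  nsmul := nsmulRec
  add_comm := by decide
  mul := Val.mul
  left_distrib := by decide
  right_distrib := by decide
  zero_mul := by decide
  mul_zero := by decide
  mul_assoc := by decide
  one := Val.L
  one_mul := by decide
  mul_one := by decide
  mul_comm := by decide

open Classical in
/-- Abstraction of a single monomial `c·X^m` (as it appears in the canonical form):
a constant `c` contributes `L` (if `c = 1`) or `A` (if `c > 1`) to the last coordinate;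
a degree-one monomial `c·Xᵢ` contributes `L` (if `c = 1`) or `A` (if `c > 1`) at
coordinate `i`; any other monomial contributes `M` at every involved coordinate
(the product rule `α(q·r) = M·α(q) ∪ M·α(r)`). -/
noncomputable def monoAbs {nv : ℕ} (m : Fin nv →₀ ℕ) (c : ℕ) : Fin (nv + 1) → Val :=
  fun i =>
    if h : (i : ℕ) < nv then
      if m ⟨i, h⟩ = 0 then Val.z
      else if (m.sum fun _ e => e) = 1 then (if c = 1 then Val.L else Val.A)
      else Val.M
    else
      if m = 0 then (if c = 0 then Val.z else if c = 1 then Val.L else Val.A)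
      else if (m.sum fun _ e => e) = 1 then Val.z
      else if 2 ≤ c then Val.M else Val.z

/-- Abstraction of a polynomial, as a vector in `Values^{n+1}`:
the sum (in the `Val` semiring) of the abstractions of its monomials. -/
noncomputable def polAbs {nv : ℕ} (p : MvPolynomial (Fin nv) ℕ) : Fin (nv + 1) → Val :=
  fun i => ∑ m ∈ p.support, monoAbs m (p.coeff m) i

/-! In the semiring `Val` a sum is `0` only if every summand is `0` (no nonzero element has an
additive inverse), and it is `L` only if one summand is `L` and all others are `0`. At the
coordinate of `Xᵢ` a monomial contributes `0` exactly when it avoids `Xᵢ`, and `L` only when it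
is `Xᵢ` itself with coefficient `1`. Hence `α(p)ᵢ = L` singles out the term `Xᵢ` of `p`, and all
other terms avoid `Xᵢ`. -/

namespace Val

instance : Subsingleton (AddUnits Val) :=
  ⟨fun u v => AddUnits.ext <| by
    have eq_zero_of_add_eq_zero : ∀ a b : Val, a + b = 0 → a = 0 := by decide
    rw [eq_zero_of_add_eq_zero _ _ u.val_neg, eq_zero_of_add_eq_zero _ _ v.val_neg]⟩

theorem add_eq_one_iff {a b : Val} : a + b = 1 ↔ a = 1 ∧ b = 0 ∨ a = 0 ∧ b = 1 := by
  revert a b; decide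

theorem exists_of_sum_eq_one {ι : Type*} {s : Finset ι} {f : ι → Val} (h : ∑ x ∈ s, f x = 1) :
    ∃ a ∈ s, f a = 1 ∧ ∀ b ∈ s, b ≠ a → f b = 0 := by
  induction s using Finset.cons_induction with
  | empty => rw [Finset.sum_empty] at h; exact absurd h (by decide)
  | cons a s ha ih =>
    rw [Finset.sum_cons] at h
    rcases add_eq_one_iff.mp h with ⟨ha_one, hs_zero⟩ | ⟨ha_zero, hs_one⟩
    · refine ⟨a, Finset.mem_cons_self a s, ha_one, fun b hb hba => ?_⟩
      exact Finset.sum_eq_zero_iff.mp hs_zero b ((Finset.mem_cons.mp hb).resolve_left hba)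
    · obtain ⟨c, hc, hc_one, hzero⟩ := ih hs_one
      refine ⟨c, Finset.mem_cons_of_mem hc, hc_one, fun b hb hbc => ?_⟩
      rcases Finset.mem_cons.mp hb with rfl | hb
      · exact ha_zero
      · exact hzero b hb hbc

end Val

theorem MvPolynomial.exists_eq_monomial_add {σ R : Type*} [CommSemiring R] [DecidableEq σ]
    (p : MvPolynomial σ R) (m₀ : σ →₀ ℕ) :
    ∃ r : MvPolynomial σ R, p = monomial m₀ (coeff m₀ p) + r ∧ r.support = p.support.erase m₀ :=
  ⟨AddMonoidAlgebra.erase m₀ p, (AddMonoidAlgebra.single_add_erase m₀ p).symm,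
    Finsupp.support_erase⟩

section

variable {nv : ℕ} (m : Fin nv →₀ ℕ) (c : ℕ) (i : Fin nv)

theorem monoAbs_castSucc :
    monoAbs m c i.castSucc =
      if m i = 0 then 0
      else if (m.sum fun _ e => e) = 1 then (if c = 1 then 1 else Val.A)
      else Val.M := by
  simp only [monoAbs, Fin.val_castSucc, i.isLt, dif_pos, Fin.eta]
  rfl

theorem monoAbs_castSucc_eq_zero_iff : monoAbs m c i.castSucc = 0 ↔ m i = 0 := by
  rw [monoAbs_castSucc]
  split_ifs <;> simp_all

theorem monoAbs_castSucc_eq_one (h : monoAbs m c i.castSucc = 1) :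
    m = Finsupp.single i 1 ∧ c = 1 := by
  rw [monoAbs_castSucc] at h
  -- `split_ifs` discards the branches where `h` reads `0 = 1`, `A = 1` or `M = 1`
  split_ifs at h with hmi hdeg hc
  obtain ⟨a, rfl⟩ := (Finsupp.sum_eq_one_iff m).mp hdeg
  obtain rfl : a = i := by simpa [Finsupp.single_apply] using hmi
  exact ⟨rfl, hc⟩

end

section

variable {nv : ℕ} (p : MvPolynomial (Fin nv) ℕ) (i : Fin nv)

theorem polAbs_castSucc_eq_zero_iff : polAbs p i.castSucc = 0 ↔ ∀ m ∈ p.support, m i = 0 := by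
  simp only [polAbs, Finset.sum_eq_zero_iff, monoAbs_castSucc_eq_zero_iff]

theorem polAbs_castSucc_eq_one (h : polAbs p i.castSucc = 1) :
    MvPolynomial.coeff (Finsupp.single i 1) p = 1 ∧
      ∀ m ∈ p.support, m ≠ Finsupp.single i 1 → m i = 0 := by
  obtain ⟨m₀, -, h_one, h_zero⟩ := Val.exists_of_sum_eq_one h
  obtain ⟨rfl, hc⟩ := monoAbs_castSucc_eq_one _ _ _ h_one
  exact ⟨hc, fun m hm hne => (monoAbs_castSucc_eq_zero_iff _ _ _).mp (h_zero m hm hne)⟩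

end

/-- If the `i`-th entry of `α(p)` is `0` then `Xᵢ` does not occur in `p`;
if it is `L` then `p = Xᵢ + r` where `Xᵢ` does not occur in `r`. -/
theorem isapp_polAbs_zero_lin {nv : ℕ} (p : MvPolynomial (Fin nv) ℕ) (i : Fin nv) :
    (polAbs p i.castSucc = Val.z → ∀ m ∈ p.support, m i = 0) ∧
    (polAbs p i.castSucc = Val.L →
      ∃ r : MvPolynomial (Fin nv) ℕ,
        p = MvPolynomial.X i + r ∧ ∀ m ∈ r.support, m i = 0) := by
  refine ⟨(polAbs_castSucc_eq_zero_iff p i).mp, fun h => ?_⟩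
  obtain ⟨h_coeff, h_other⟩ := polAbs_castSucc_eq_one p i h
  obtain ⟨r, hp, hr⟩ := p.exists_eq_monomial_add (Finsupp.single i 1)
  refine ⟨r, by rwa [h_coeff] at hp, fun m hm => ?_⟩
  rw [hr, Finset.mem_erase] at hm
  exact h_other m hm.2 hm.1
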